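/- arXiv:1504.03830 — 6 statements merged into one kernel-verified Lean document; each statement's English description precedes it below -/
import Mathlib

section
/- Let X, Y be metric spaces, R ⊆ X × Y a correspondence, α ∈ [0,1], β = 1-α, and equip R with the semimetric d_α((x,y),(x',y')) = α·d_X(x,x') + β·d_Y(y,y'). Then the correspondence R_x = {(x,(x,y)) : (x,y) ∈ R} between X and (R, d_α) has distortion equal to β · dis(R), where dis(R) = sup{ |d_X(x,x') − d_Y(y,y')| : (x,y),(x',y') ∈ R }. -/
open GromovHausdorff Metric Filter Topology

def IsCorrespondence {X Y : Type*} (R : Set (X × Y)) : Prop :=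
  (∀ x : X, ∃ y : Y, (x, y) ∈ R) ∧ (∀ y : Y, ∃ x : X, (x, y) ∈ R)

noncomputable def corrDis {X Y : Type*} [MetricSpace X] [MetricSpace Y]
    (R : Set (X × Y)) : ℝ :=
  sSup {r : ℝ | ∃ p ∈ R, ∃ q ∈ R, r = |dist p.1 q.1 - dist p.2 q.2|}

theorem abs_sub_mul_add_one_sub_mul {α : ℝ} (hα : α ≤ 1) (a b : ℝ) :
    |a - (α * a + (1 - α) * b)| = (1 - α) * |a - b| := by
  rw [show a - (α * a + (1 - α) * b) = (1 - α) * (a - b) by ring, abs_mul,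
    abs_of_nonneg (sub_nonneg.mpr hα)]

open Pointwise in
theorem setOf_exists_mem_mul_eq_smul {P : Type*} (R : Set P) (c : ℝ) (g : P → P → ℝ) :
    {r : ℝ | ∃ p ∈ R, ∃ q ∈ R, r = c * g p q} = c • {r : ℝ | ∃ p ∈ R, ∃ q ∈ R, r = g p q} := by
  ext r
  constructor
  · rintro ⟨p, hp, q, hq, rfl⟩
    exact ⟨g p q, ⟨p, hp, q, hq, rfl⟩, rfl⟩
  · rintro ⟨s, ⟨p, hp, q, hq, rfl⟩, rfl⟩
    exact ⟨p, hp, q, hq, rfl⟩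

theorem stmt2_general {X Y : Type*} [MetricSpace X] [MetricSpace Y]
    (R : Set (X × Y))
    (α : ℝ) (hα : α ∈ Set.Icc (0 : ℝ) 1) :
    sSup {r : ℝ | ∃ p ∈ R, ∃ q ∈ R,
        r = |dist p.1 q.1 - (α * dist p.1 q.1 + (1 - α) * dist p.2 q.2)|} =
      (1 - α) * corrDis R := by
  simp_rw [abs_sub_mul_add_one_sub_mul hα.2, setOf_exists_mem_mul_eq_smul]
  rw [Real.sSup_smul_of_nonneg (sub_nonneg.mpr hα.2), smul_eq_mul, corrDis]

theorem stmt2 {X Y : Type*} [MetricSpace X] [MetricSpace Y]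
    (R : Set (X × Y)) (hR : IsCorrespondence R)
    (α : ℝ) (hα : α ∈ Set.Icc (0 : ℝ) 1) :
    sSup {r : ℝ | ∃ p ∈ R, ∃ q ∈ R,
        r = |dist p.1 q.1 - (α * dist p.1 q.1 + (1 - α) * dist p.2 q.2)|} =
      (1 - α) * corrDis R :=
  stmt2_general R α hα
end

section
/- Let X, Y be metric spaces, R ⊆ X × Y a correspondence, α ∈ [0,1], β = 1-α, and equip R with d_α((x,y),(x',y')) = α·d_X(x,x') + β·d_Y(y,y'). Then the correspondence R_y = {((x,y),y) : (x,y) ∈ R} between (R, d_α) and Y has distortion equal to α · dis(R). -/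
open GromovHausdorff Metric Filter Topology

lemma abs_mul_add_one_sub_mul_sub {α : ℝ} (hα : 0 ≤ α) (a b : ℝ) :
    |(α * a + (1 - α) * b) - b| = α * |a - b| := by
  rw [show α * a + (1 - α) * b - b = α * (a - b) by ring, abs_mul, abs_of_nonneg hα]

open Pointwise in
lemma Real.sSup_setOf_pairs_mul_of_nonneg {ι : Type*} (S : Set ι) (f : ι → ι → ℝ)
    {c : ℝ} (hc : 0 ≤ c) :
    sSup {r : ℝ | ∃ p ∈ S, ∃ q ∈ S, r = c * f p q} =
      c * sSup {r : ℝ | ∃ p ∈ S, ∃ q ∈ S, r = f p q} := by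
  have hset : {r : ℝ | ∃ p ∈ S, ∃ q ∈ S, r = c * f p q} =
      c • {r : ℝ | ∃ p ∈ S, ∃ q ∈ S, r = f p q} := by
    ext r
    simp only [Set.mem_smul_set, Set.mem_ofPred_eq, smul_eq_mul]
    constructor
    · rintro ⟨p, hp, q, hq, rfl⟩
      exact ⟨f p q, ⟨p, hp, q, hq, rfl⟩, rfl⟩
    · rintro ⟨_, ⟨p, hp, q, hq, rfl⟩, rfl⟩
      exact ⟨p, hp, q, hq, rfl⟩
  rw [hset, Real.sSup_smul_of_nonneg hc, smul_eq_mul]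

theorem stmt3_general {X Y : Type*} [MetricSpace X] [MetricSpace Y]
    (R : Set (X × Y))
    (α : ℝ) (hα : α ∈ Set.Icc (0 : ℝ) 1) :
    sSup {r : ℝ | ∃ p ∈ R, ∃ q ∈ R,
        r = |(α * dist p.1 q.1 + (1 - α) * dist p.2 q.2) - dist p.2 q.2|} =
      α * corrDis R := by
  simp_rw [abs_mul_add_one_sub_mul_sub hα.1]
  exact Real.sSup_setOf_pairs_mul_of_nonneg R _ hα.1

theorem stmt3 {X Y : Type*} [MetricSpace X] [MetricSpace Y]
    (R : Set (X × Y)) (hR : IsCorrespondence R)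
    (α : ℝ) (hα : α ∈ Set.Icc (0 : ℝ) 1) :
    sSup {r : ℝ | ∃ p ∈ R, ∃ q ∈ R,
        r = |(α * dist p.1 q.1 + (1 - α) * dist p.2 q.2) - dist p.2 q.2|} =
      α * corrDis R :=
  stmt3_general R α hα
end

section
/- Let X and Y be finite metric spaces and R an optimal correspondence on them (so d_GH(X,Y) = (1/2)·dis R). For α ∈ (0,1) and β = 1-α, equip R with the metric d_α((x,y),(x',y')) = α·d_X(x,x') + β·d_Y(y,y'). Then d_GH(X, (R,d_α)) = β·d_GH(X,Y) and d_GH((R,d_α), Y) = α·d_GH(X,Y). -/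
/-!
Let `Z` carry the weighted metric `α d_X + (1 - α) d_Y` pulled back along surjections onto `X`
and `Y`. Then `d_Z - d_X = (1 - α)(d_Y - d_X)` and `d_Z - d_Y = α (d_X - d_Y)`, so the
projections have distortion at most `(1 - α) D` and `α D`, where `D` bounds the distortion
between `X` and `Y`. When `D = 2 d_GH(X, Y)`, as for an optimal correspondence, the two resulting
bounds on `d_GH(X, Z)` and `d_GH(Z, Y)` add up to `d_GH(X, Y)`, so the triangle inequality
forces both to be equalities.
-/

open GromovHausdorff Metric Filter Topology

theorem abs_dist_sub_dist_le_corrDis {X Y : Type*} [MetricSpace X] [MetricSpace Y]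
    {R : Set (X × Y)} (hR : R.Finite) {p q : X × Y} (hp : p ∈ R) (hq : q ∈ R) :
    |dist p.1 q.1 - dist p.2 q.2| ≤ corrDis R := by
  refine le_csSup ?_ ⟨p, hp, q, hq, rfl⟩
  refine (hR.image2 (fun p q : X × Y => |dist p.1 q.1 - dist p.2 q.2|) hR).bddAbove.mono ?_
  rintro _ ⟨p, hp, q, hq, rfl⟩
  exact ⟨p, hp, q, hq, rfl⟩

namespace GromovHausdorff

variable {X Y Z : Type*} [MetricSpace X] [CompactSpace X] [Nonempty X]
  [MetricSpace Z] [CompactSpace Z] [Nonempty Z]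

theorem ghDist_le_of_surjective {f : Z → X} (hf : Function.Surjective f) {ε : ℝ}
    (h : ∀ a b, |dist a b - dist (f a) (f b)| ≤ ε) : ghDist Z X ≤ ε / 2 := by
  have := ghDist_le_of_approx_subsets (fun z : (Set.univ : Set Z) => f z) (ε₁ := 0) (ε₃ := 0)
    (fun z => ⟨z, trivial, (dist_self z).le⟩)
    (fun x => by
      obtain ⟨z, rfl⟩ := hf x
      exact ⟨⟨z, trivial⟩, (dist_self _).le⟩)
    (fun a b => h a b)
  simpa using this

theorem ghDist_le_of_weighted_dist [MetricSpace Y] {f : Z → X} {g : Z → Y}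
    (hf : Function.Surjective f) {α D : ℝ} (hα : α ≤ 1)
    (hdist : ∀ a b, dist a b = α * dist (f a) (f b) + (1 - α) * dist (g a) (g b))
    (hD : ∀ a b, |dist (f a) (f b) - dist (g a) (g b)| ≤ D) :
    ghDist Z X ≤ (1 - α) * D / 2 := by
  refine ghDist_le_of_surjective hf fun a b => ?_
  calc |dist a b - dist (f a) (f b)|
      = |(1 - α) * (dist (g a) (g b) - dist (f a) (f b))| := by rw [hdist]; ring_nf
    _ = (1 - α) * |dist (f a) (f b) - dist (g a) (g b)| := by
        rw [abs_mul, abs_of_nonneg (sub_nonneg.2 hα), abs_sub_comm]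
    _ ≤ (1 - α) * D := mul_le_mul_of_nonneg_left (hD a b) (sub_nonneg.2 hα)

theorem ghDist_eq_of_weighted_dist [MetricSpace Y] [CompactSpace Y] [Nonempty Y]
    {f : Z → X} {g : Z → Y} (hf : Function.Surjective f) (hg : Function.Surjective g)
    {α : ℝ} (hα : α ∈ Set.Icc (0 : ℝ) 1)
    (hdist : ∀ a b, dist a b = α * dist (f a) (f b) + (1 - α) * dist (g a) (g b))
    (hD : ∀ a b, |dist (f a) (f b) - dist (g a) (g b)| ≤ 2 * ghDist X Y) :
    ghDist X Z = (1 - α) * ghDist X Y ∧ ghDist Z Y = α * ghDist X Y := by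
  have hZX : ghDist Z X ≤ (1 - α) * (2 * ghDist X Y) / 2 :=
    ghDist_le_of_weighted_dist hf hα.2 hdist hD
  have hZY : ghDist Z Y ≤ (1 - (1 - α)) * (2 * ghDist X Y) / 2 :=
    ghDist_le_of_weighted_dist (g := f) hg (by linarith [hα.1])
      (fun a b => by rw [hdist a b]; ring) (fun a b => by rw [abs_sub_comm]; exact hD a b)
  have hXZ : ghDist X Z = ghDist Z X := dist_comm _ _
  have htri : ghDist X Y ≤ ghDist X Z + ghDist Z Y := dist_triangle _ _ _
  constructor <;> linarith

end GromovHausdorff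

theorem stmt6 {X Y : Type*} [MetricSpace X] [MetricSpace Y]
    [Fintype X] [Fintype Y] [Nonempty X] [Nonempty Y]
    (R : Set (X × Y)) (hR : IsCorrespondence R) [Nonempty ↥R]
    (hopt : ghDist X Y = (1 / 2) * corrDis R)
    (α : ℝ) (hα : α ∈ Set.Ioo (0 : ℝ) 1)
    (dR : MetricSpace ↥R)
    (hdist : ∀ p q : ↥R, @dist _ dR.toDist p q =
      α * dist (p : X × Y).1 (q : X × Y).1 + (1 - α) * dist (p : X × Y).2 (q : X × Y).2) :
    (letI := dR; ghDist X ↥R = (1 - α) * ghDist X Y) ∧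
    (letI := dR; ghDist ↥R Y = α * ghDist X Y) := by
  let _ := dR
  have hfst : Function.Surjective fun p : ↥R => (p : X × Y).1 := fun x => by
    obtain ⟨y, hxy⟩ := hR.1 x
    exact ⟨⟨(x, y), hxy⟩, rfl⟩
  have hsnd : Function.Surjective fun p : ↥R => (p : X × Y).2 := fun y => by
    obtain ⟨x, hxy⟩ := hR.2 y
    exact ⟨⟨(x, y), hxy⟩, rfl⟩
  refine ghDist_eq_of_weighted_dist hfst hsnd (Set.Ioo_subset_Icc_self hα) hdist fun p q => ?_
  have hdis := abs_dist_sub_dist_le_corrDis (Set.toFinite R) p.2 q.2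
  rw [hopt]
  linarith
end

section
/- For any two compact metric spaces X and Y there exists a compact metric space R that is a midpoint between them in the Gromov–Hausdorff metric: d_GH(X,R) = d_GH(R,Y) = d_GH(X,Y)/2. -/
open GromovHausdorff Metric Filter Topology

/-!
Take an optimal coupling of `X` and `Y`, at Hausdorff distance `d = d_GH(X, Y)`, and let `R` be the
correspondence of pairs `(x, y)` at distance at most `d` in it; its distortion is at most `2d`.
Put on `R` the metric `(d_X + d_Y) / 2`. Its distortion with respect to either projection is then
at most `d`, so `R` is within `d / 2` of both `X` and `Y`, and the triangle inequality forces
equality.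
-/

theorem IsCorrespondence.nonempty {X Y : Type*} [Nonempty X] {R : Set (X × Y)} (hR : IsCorrespondence R) :
    Nonempty R :=
  let ⟨_, hy⟩ := hR.1 (Classical.arbitrary X)
  ⟨⟨_, hy⟩⟩

section Gluing

variable {X Y Z : Type*} [MetricSpace X] [CompactSpace X] [Nonempty X]
  [MetricSpace Y] [CompactSpace Y] [Nonempty Y]

theorem ghDist_le_of_surjective {f : Z → X} {g : Z → Y} (hf : Function.Surjective f)
    (hg : Function.Surjective g) {ε : ℝ}
    (H : ∀ p q, |dist (f p) (f q) - dist (g p) (g q)| ≤ 2 * ε) : ghDist X Y ≤ ε := by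
  have : Nonempty Z := hf.nonempty
  have hε : 0 ≤ ε := by
    have := H (Classical.arbitrary Z) (Classical.arbitrary Z)
    simp only [dist_self, sub_self, abs_zero] at this
    linarith
  refine le_of_forall_pos_le_add fun δ hδ => ?_
  -- `glueMetricApprox` needs a positive gluing distance to separate `f p` from `g p`.
  let : MetricSpace (X ⊕ Y) :=
    glueMetricApprox f g (ε + δ) (by linarith) fun p q => (H p q).trans (by linarith)
  have glued (p : Z) : dist (Sum.inl (f p) : X ⊕ Y) (Sum.inr (g p)) ≤ ε + δ :=
    (glueDist_glued_points f g (ε + δ) p).le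
  calc ghDist X Y ≤ hausdorffDist (Set.range (Sum.inl : X → X ⊕ Y)) (Set.range Sum.inr) :=
        ghDist_le_hausdorffDist (Isometry.of_dist_eq fun _ _ => rfl)
          (Isometry.of_dist_eq fun _ _ => rfl)
    _ ≤ ε + δ := by
        refine hausdorffDist_le_of_mem_dist (by linarith) ?_ ?_
        · rintro _ ⟨x, rfl⟩
          obtain ⟨p, rfl⟩ := hf x
          exact ⟨_, Set.mem_range_self (g p), glued p⟩
        · rintro _ ⟨y, rfl⟩
          obtain ⟨p, rfl⟩ := hg y
          exact ⟨_, Set.mem_range_self (f p), by rw [dist_comm]; exact glued p⟩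

end Gluing

section NearPairs

variable {X Y Z : Type*} [MetricSpace X] [MetricSpace Y] [MetricSpace Z]

def nearPairs (Φ : X → Z) (Ψ : Y → Z) (r : ℝ) : Set (X × Y) :=
  {p | dist (Φ p.1) (Ψ p.2) ≤ r}

theorem isClosed_nearPairs {Φ : X → Z} {Ψ : Y → Z} (hΦ : Continuous Φ) (hΨ : Continuous Ψ)
    (r : ℝ) : IsClosed (nearPairs Φ Ψ r) :=
  isClosed_le ((hΦ.comp continuous_fst).dist (hΨ.comp continuous_snd)) continuous_const

theorem abs_dist_sub_dist_le_of_mem_nearPairs {Φ : X → Z} {Ψ : Y → Z} (hΦ : Isometry Φ)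
    (hΨ : Isometry Ψ) {r : ℝ} {p q : X × Y} (hp : p ∈ nearPairs Φ Ψ r)
    (hq : q ∈ nearPairs Φ Ψ r) : |dist p.1 q.1 - dist p.2 q.2| ≤ 2 * r := by
  rw [← hΦ.dist_eq, ← hΨ.dist_eq, ← Real.dist_eq]
  calc dist (dist (Φ p.1) (Φ q.1)) (dist (Ψ p.2) (Ψ q.2))
      ≤ dist (Φ p.1) (Ψ p.2) + dist (Φ q.1) (Ψ q.2) := dist_dist_dist_le _ _ _ _
    _ ≤ r + r := add_le_add hp hq
    _ = 2 * r := (two_mul r).symm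

theorem IsCompact.exists_dist_le_of_hausdorffDist_le {s t : Set Z} (hs : Bornology.IsBounded s)
    (ht : IsCompact t) (hne : t.Nonempty) {r : ℝ} (h : hausdorffDist s t ≤ r) {a : Z}
    (ha : a ∈ s) : ∃ b ∈ t, dist a b ≤ r := by
  obtain ⟨b, hb, hab⟩ := ht.exists_infDist_eq_dist hne a
  refine ⟨b, hb, ?_⟩
  rw [← hab]
  exact (infDist_le_hausdorffDist_of_mem ha
    (hausdorffEDist_ne_top_of_nonempty_of_bounded ⟨a, ha⟩ hne hs ht.isBounded)).trans h

theorem isCorrespondence_nearPairs [CompactSpace X] [CompactSpace Y] [Nonempty X] [Nonempty Y]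
    {Φ : X → Z} {Ψ : Y → Z} (hΦ : Continuous Φ) (hΨ : Continuous Ψ) {r : ℝ}
    (h : hausdorffDist (Set.range Φ) (Set.range Ψ) ≤ r) : IsCorrespondence (nearPairs Φ Ψ r) := by
  have hΦc := isCompact_range hΦ
  have hΨc := isCompact_range hΨ
  constructor
  · intro x
    obtain ⟨_, ⟨y, rfl⟩, hxy⟩ := hΨc.exists_dist_le_of_hausdorffDist_le hΦc.isBounded
      (Set.range_nonempty Ψ) h (Set.mem_range_self x)
    exact ⟨y, hxy⟩
  · intro y
    obtain ⟨_, ⟨x, rfl⟩, hxy⟩ := hΦc.exists_dist_le_of_hausdorffDist_le hΨc.isBounded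
      (Set.range_nonempty Φ) (hausdorffDist_comm.trans_le h) (Set.mem_range_self y)
    exact ⟨x, by rwa [dist_comm] at hxy⟩

end NearPairs

def HalfSum {X Y : Type*} (R : Set (X × Y)) : Type _ := R

namespace HalfSum

variable {X Y : Type*} {R : Set (X × Y)}

def mk (p : R) : HalfSum R := p

def fst (p : HalfSum R) : X := (p : R).1.1

def snd (p : HalfSum R) : Y := (p : R).1.2

theorem ext {p q : HalfSum R} (h₁ : p.fst = q.fst) (h₂ : p.snd = q.snd) : p = q :=
  Subtype.ext (Prod.ext h₁ h₂)

instance [Nonempty R] : Nonempty (HalfSum R) := ‹Nonempty R›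

theorem surjective_fst (hR : IsCorrespondence R) : Function.Surjective (fst : HalfSum R → X) :=
  fun x => let ⟨y, hy⟩ := hR.1 x; ⟨mk ⟨(x, y), hy⟩, rfl⟩

theorem surjective_snd (hR : IsCorrespondence R) : Function.Surjective (snd : HalfSum R → Y) :=
  fun y => let ⟨x, hx⟩ := hR.2 y; ⟨mk ⟨(x, y), hx⟩, rfl⟩

variable [MetricSpace X] [MetricSpace Y]

noncomputable instance : MetricSpace (HalfSum R) where
  dist p q := (dist p.fst q.fst + dist p.snd q.snd) / 2
  dist_self p := by simp
  dist_comm p q := by simp only [dist_comm]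
  dist_triangle p q s := by
    linarith [dist_triangle p.fst q.fst s.fst, dist_triangle p.snd q.snd s.snd]
  eq_of_dist_eq_zero {p q} h := by
    have := (add_eq_zero_iff_of_nonneg dist_nonneg dist_nonneg).mp
      (div_eq_zero_iff.mp h |>.resolve_right two_ne_zero)
    exact ext (dist_eq_zero.mp this.1) (dist_eq_zero.mp this.2)

theorem dist_eq (p q : HalfSum R) : dist p q = (dist p.fst q.fst + dist p.snd q.snd) / 2 := rfl

theorem abs_dist_fst_sub_dist (p q : HalfSum R) :
    |dist p.fst q.fst - dist p q| = |dist p.fst q.fst - dist p.snd q.snd| / 2 := by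
  rw [dist_eq, ← abs_two, ← abs_div, abs_two]
  ring_nf

theorem abs_dist_sub_dist_snd (p q : HalfSum R) :
    |dist p q - dist p.snd q.snd| = |dist p.fst q.fst - dist p.snd q.snd| / 2 := by
  rw [dist_eq, ← abs_two, ← abs_div, abs_two]
  ring_nf

theorem lipschitzWith_mk : LipschitzWith 1 (mk : R → HalfSum R) :=
  LipschitzWith.of_dist_le_mul fun p q => by
    rw [NNReal.coe_one, one_mul, Subtype.dist_eq, Prod.dist_eq]
    change (dist p.1.1 q.1.1 + dist p.1.2 q.1.2) / 2 ≤ _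
    linarith [le_max_left (dist p.1.1 q.1.1) (dist p.1.2 q.1.2),
      le_max_right (dist p.1.1 q.1.1) (dist p.1.2 q.1.2)]

instance [CompactSpace R] : CompactSpace (HalfSum R) :=
  Function.surjective_id.compactSpace (f := mk) lipschitzWith_mk.continuous

theorem abs_dist_fst_sub_dist_snd_le {r : ℝ}
    (hdis : ∀ p ∈ R, ∀ q ∈ R, |dist p.1 q.1 - dist p.2 q.2| ≤ 2 * r) (p q : HalfSum R) :
    |dist p.fst q.fst - dist p.snd q.snd| ≤ 2 * r :=
  hdis _ (p : R).2 _ (q : R).2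

variable [CompactSpace R] [Nonempty R] {r : ℝ}

theorem ghDist_left_le [CompactSpace X] [Nonempty X] (hR : IsCorrespondence R)
    (hdis : ∀ p ∈ R, ∀ q ∈ R, |dist p.1 q.1 - dist p.2 q.2| ≤ 2 * r) :
    ghDist X (HalfSum R) ≤ r / 2 :=
  ghDist_le_of_surjective (surjective_fst hR) Function.surjective_id fun p q => by
    rw [id, id, abs_dist_fst_sub_dist]
    linarith [abs_dist_fst_sub_dist_snd_le hdis p q]

theorem ghDist_right_le [CompactSpace Y] [Nonempty Y] (hR : IsCorrespondence R)
    (hdis : ∀ p ∈ R, ∀ q ∈ R, |dist p.1 q.1 - dist p.2 q.2| ≤ 2 * r) :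
    ghDist (HalfSum R) Y ≤ r / 2 :=
  ghDist_le_of_surjective Function.surjective_id (surjective_snd hR) fun p q => by
    rw [id, id, abs_dist_sub_dist_snd]
    linarith [abs_dist_fst_sub_dist_snd_le hdis p q]

end HalfSum

theorem stmt13 (X Y : Type) [MetricSpace X] [Nonempty X] [CompactSpace X]
    [MetricSpace Y] [Nonempty Y] [CompactSpace Y] :
    ∃ (R : Type) (mR : MetricSpace R),
      letI := mR
      ∃ (_ : CompactSpace R) (_ : Nonempty R),
        ghDist X R = ghDist X Y / 2 ∧ ghDist R Y = ghDist X Y / 2 := by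
  have hΦ := isometry_optimalGHInjl X Y
  have hΨ := isometry_optimalGHInjr X Y
  set R := nearPairs (optimalGHInjl X Y) (optimalGHInjr X Y) (ghDist X Y)
  have hR : IsCorrespondence R :=
    isCorrespondence_nearPairs hΦ.continuous hΨ.continuous hausdorffDist_optimal.le
  have : CompactSpace R :=
    isCompact_iff_compactSpace.mp (isClosed_nearPairs hΦ.continuous hΨ.continuous _).isCompact
  have : Nonempty R := hR.nonempty
  have hdis : ∀ p ∈ R, ∀ q ∈ R, |dist p.1 q.1 - dist p.2 q.2| ≤ 2 * ghDist X Y :=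
    fun _ hp _ hq => abs_dist_sub_dist_le_of_mem_nearPairs hΦ hΨ hp hq
  have hl := HalfSum.ghDist_left_le hR hdis
  have hr := HalfSum.ghDist_right_le hR hdis
  have triangle : ghDist X Y ≤ ghDist X (HalfSum R) + ghDist (HalfSum R) Y :=
    dist_triangle (toGHSpace X) (toGHSpace (HalfSum R)) (toGHSpace Y)
  exact ⟨HalfSum R, inferInstance, inferInstance, inferInstance, by linarith, by linarith⟩
end

section
/- The space 𝔐 of isometry classes of nonempty compact metric spaces endowed with the Gromov–Hausdorff metric is a geodesic metric space: any two compact metric spaces X and Y can be joined by an isometric embedding γ: [0, d_GH(X,Y)] → 𝔐 with γ(0) = X and γ(d_GH(X,Y)) = Y. -/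
open GromovHausdorff Metric Filter Topology

/-!
Let `d = d_GH(X, Y)` and let `R ⊆ X × Y` be the set of pairs at distance `≤ d` in an optimal
coupling of `X` and `Y`: it is a closed correspondence of distortion at most `2 d`. For
`c ∈ [0, 1]`, the set `R` with the pseudometric `(1 - c) d_X + c d_Y` is compact; at `c = 0` and
`c = 1` it is `X` and `Y`, and gluing two of these spaces along `R` shows that they are at
Gromov–Hausdorff distance at most `d |c - c'|`. A `1`-Lipschitz path `[0, d] → 𝔐` between points
at distance `d` is an isometric embedding.
-/

open Set Function

section Geodesic

variable {α : Type*}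

theorem dist_eq_abs_sub_of_dist_le_of_dist_endpoints [PseudoMetricSpace α] {γ : ℝ → α} {D : ℝ}
    (hγ : ∀ s ∈ Icc 0 D, ∀ t ∈ Icc 0 D, dist (γ s) (γ t) ≤ |s - t|)
    (hD : dist (γ 0) (γ D) = D) :
    ∀ s ∈ Icc 0 D, ∀ t ∈ Icc 0 D, dist (γ s) (γ t) = |s - t| := by
  have key : ∀ s ∈ Icc 0 D, ∀ t ∈ Icc 0 D, s ≤ t → dist (γ s) (γ t) = t - s := by
    intro s hs t ht hst
    have h0 : (0 : ℝ) ∈ Icc 0 D := left_mem_Icc.2 (hs.1.trans hs.2)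
    have hD' : D ∈ Icc 0 D := right_mem_Icc.2 (hs.1.trans hs.2)
    have hst' := hγ s hs t ht
    have h0s := hγ 0 h0 s hs
    have htD := hγ t ht D hD'
    rw [abs_sub_comm, abs_of_nonneg (by linarith)] at hst'
    rw [abs_sub_comm, abs_of_nonneg (by linarith [hs.1])] at h0s
    rw [abs_sub_comm, abs_of_nonneg (by linarith [ht.2])] at htD
    linarith [dist_triangle4 (γ 0) (γ s) (γ t) (γ D)]
  intro s hs t ht
  rcases le_total s t with hst | hts
  · rw [key s hs t ht hst, abs_sub_comm, abs_of_nonneg (sub_nonneg.2 hst)]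
  · rw [dist_comm, key t ht s hs hts, abs_of_nonneg (sub_nonneg.2 hts)]

theorem exists_geodesic_of_dist_le_mul [MetricSpace α] (P : unitInterval → α)
    (hP : ∀ c c', dist (P c) (P c') ≤ dist (P 0) (P 1) * dist c c') :
    ∃ γ : ℝ → α, γ 0 = P 0 ∧ γ (dist (P 0) (P 1)) = P 1 ∧
      ∀ s ∈ Icc 0 (dist (P 0) (P 1)), ∀ t ∈ Icc 0 (dist (P 0) (P 1)),
        dist (γ s) (γ t) = |s - t| := by
  set D := dist (P 0) (P 1)
  let γ : ℝ → α := fun t => P (projIcc 0 1 zero_le_one (t / D))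
  have hγ0 : γ 0 = P 0 := by simp [γ, projIcc_left]
  have hγD : γ D = P 1 := by
    rcases eq_or_ne D 0 with hD | hD
    · rw [hD, hγ0]; exact dist_eq_zero.1 hD
    · simp [γ, div_self hD, projIcc_right]
  have hlip : ∀ s t, dist (γ s) (γ t) ≤ |s - t| := by
    intro s t
    calc dist (γ s) (γ t) ≤ D * |s / D - t / D| :=
          (hP _ _).trans (mul_le_mul_of_nonneg_left (abs_projIcc_sub_projIcc _) dist_nonneg)
      _ ≤ |s - t| := by
          rcases eq_or_ne D 0 with hD | hD
          · simp [hD]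
          · rw [← sub_div, abs_div, abs_of_nonneg dist_nonneg, mul_div_cancel₀ _ hD]
  refine ⟨γ, hγ0, hγD, dist_eq_abs_sub_of_dist_le_of_dist_endpoints (fun s _ t _ => hlip s t) ?_⟩
  rw [hγ0, hγD]

end Geodesic

section Correspondence

variable {A B Z : Type*} [PseudoMetricSpace Z] {f : A → Z} {g : B → Z}

theorem IsCorrespondence.surjective_fst {R : Set (A × B)} (hR : IsCorrespondence R) :
    Surjective fun p : R => p.1.1 := fun a =>
  let ⟨b, hb⟩ := hR.1 a
  ⟨⟨(a, b), hb⟩, rfl⟩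

theorem IsCorrespondence.surjective_snd {R : Set (A × B)} (hR : IsCorrespondence R) :
    Surjective fun p : R => p.1.2 := fun b =>
  let ⟨a, ha⟩ := hR.2 b
  ⟨⟨(a, b), ha⟩, rfl⟩

theorem isClosed_setOf_dist_le [TopologicalSpace A] [TopologicalSpace B] (hf : Continuous f)
    (hg : Continuous g) (r : ℝ) : IsClosed {p : A × B | dist (f p.1) (g p.2) ≤ r} :=
  isClosed_le ((hf.comp continuous_fst).dist (hg.comp continuous_snd)) continuous_const

theorem exists_dist_le_hausdorffDist {s t : Set Z} (hs : IsCompact s) (ht : IsCompact t)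
    (hs₀ : s.Nonempty) (ht₀ : t.Nonempty) {x : Z} (hx : x ∈ s) :
    ∃ y ∈ t, dist x y ≤ hausdorffDist s t := by
  obtain ⟨y, hy, hxy⟩ := ht.exists_infDist_eq_dist ht₀ x
  refine ⟨y, hy, hxy ▸ infDist_le_hausdorffDist_of_mem hx ?_⟩
  exact hausdorffEDist_ne_top_of_nonempty_of_bounded hs₀ ht₀ hs.isBounded ht.isBounded

theorem isCorrespondence_setOf_dist_le_hausdorffDist [TopologicalSpace A] [TopologicalSpace B]
    [CompactSpace A] [CompactSpace B] [Nonempty A] [Nonempty B]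
    (hf : Continuous f) (hg : Continuous g) :
    IsCorrespondence {p : A × B | dist (f p.1) (g p.2) ≤ hausdorffDist (range f) (range g)} := by
  have hfc := isCompact_range hf
  have hgc := isCompact_range hg
  constructor
  · intro a
    obtain ⟨_, ⟨b, rfl⟩, hab⟩ :=
      exists_dist_le_hausdorffDist hfc hgc (range_nonempty f) (range_nonempty g) (mem_range_self a)
    exact ⟨b, hab⟩
  · intro b
    obtain ⟨_, ⟨a, rfl⟩, hab⟩ :=
      exists_dist_le_hausdorffDist hgc hfc (range_nonempty g) (range_nonempty f) (mem_range_self b)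
    exact ⟨a, by rwa [mem_ofPred_eq, dist_comm, hausdorffDist_comm]⟩

theorem abs_dist_sub_dist_le_of_dist_le [PseudoMetricSpace A] [PseudoMetricSpace B]
    (hf : Isometry f) (hg : Isometry g) {r : ℝ} {p q : A × B}
    (hp : dist (f p.1) (g p.2) ≤ r) (hq : dist (f q.1) (g q.2) ≤ r) :
    |dist p.1 q.1 - dist p.2 q.2| ≤ 2 * r := by
  rw [← hf.dist_eq, ← hg.dist_eq, ← Real.dist_eq]
  linarith [dist_dist_dist_le (f p.1) (f q.1) (g p.2) (g q.2)]

end Correspondence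

instance SeparationQuotient.compactSpace {X : Type*} [TopologicalSpace X] [CompactSpace X] :
    CompactSpace (SeparationQuotient X) :=
  SeparationQuotient.surjective_mk.compactSpace SeparationQuotient.continuous_mk

namespace GromovHausdorff

theorem dist_toGHSpace_le_of_surjective {W P Q : Type*} [MetricSpace P] [CompactSpace P]
    [Nonempty P] [MetricSpace Q] [CompactSpace Q] [Nonempty Q] {Φ : W → P} {Ψ : W → Q}
    (hΦ : Surjective Φ) (hΨ : Surjective Ψ) {ε : ℝ} (hε : 0 ≤ ε)
    (H : ∀ p q, |dist (Φ p) (Φ q) - dist (Ψ p) (Ψ q)| ≤ 2 * ε) :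
    dist (toGHSpace P) (toGHSpace Q) ≤ ε := by
  have : Nonempty W := hΦ.nonempty
  refine le_of_forall_pos_le_add fun δ hδ => ?_
  have H' : ∀ p q, |dist (Φ p) (Φ q) - dist (Ψ p) (Ψ q)| ≤ 2 * (ε + δ) :=
    fun p q => (H p q).trans (by linarith)
  let _ : MetricSpace (P ⊕ Q) := glueMetricApprox Φ Ψ (ε + δ) (by linarith) H'
  have hglued : ∀ w, dist (Sum.inl (Φ w) : P ⊕ Q) (Sum.inr (Ψ w)) = ε + δ :=
    glueDist_glued_points Φ Ψ (ε + δ)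
  have hl : Isometry (Sum.inl : P → P ⊕ Q) := .of_dist_eq fun _ _ => rfl
  have hr : Isometry (Sum.inr : Q → P ⊕ Q) := .of_dist_eq fun _ _ => rfl
  refine (ghDist_le_hausdorffDist hl hr).trans (hausdorffDist_le_of_mem_dist (by linarith) ?_ ?_)
  · rintro _ ⟨x, rfl⟩
    obtain ⟨w, rfl⟩ := hΦ x
    exact ⟨_, mem_range_self (Ψ w), (hglued w).le⟩
  · rintro _ ⟨y, rfl⟩
    obtain ⟨w, rfl⟩ := hΨ y
    exact ⟨_, mem_range_self (Φ w), (dist_comm _ _).trans_le (hglued w).le⟩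

structure InterpSpace {A B : Type*} (R : Set (A × B)) (c : unitInterval) where
  pt : R

theorem InterpSpace.surjective_mk {A B : Type*} {R : Set (A × B)} {c : unitInterval} :
    Surjective (mk : R → InterpSpace R c) :=
  fun ⟨p⟩ => ⟨p, rfl⟩

variable {A B : Type*} [MetricSpace A] [MetricSpace B]

namespace InterpSpace

variable {R : Set (A × B)} {c : unitInterval}

instance : PseudoMetricSpace (InterpSpace R c) where
  dist p q := (1 - c) * dist p.pt.1.1 q.pt.1.1 + c * dist p.pt.1.2 q.pt.1.2
  dist_self p := by simp
  dist_comm p q := by simp only [dist_comm]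
  dist_triangle p q r := by
    have h₁ := dist_triangle p.pt.1.1 q.pt.1.1 r.pt.1.1
    have h₂ := dist_triangle p.pt.1.2 q.pt.1.2 r.pt.1.2
    have hc := unitInterval.nonneg c
    have hc' := unitInterval.one_minus_nonneg c
    nlinarith

theorem dist_mk (p q : R) :
    dist (⟨p⟩ : InterpSpace R c) ⟨q⟩ = (1 - c) * dist p.1.1 q.1.1 + c * dist p.1.2 q.1.2 :=
  rfl

theorem dist_mk_le (p q : R) : dist (⟨p⟩ : InterpSpace R c) ⟨q⟩ ≤ dist p q := by
  have h₁ : dist p.1.1 q.1.1 ≤ dist p q := le_max_left _ _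
  have h₂ : dist p.1.2 q.1.2 ≤ dist p q := le_max_right _ _
  have hc := unitInterval.nonneg c
  have hc' := unitInterval.one_minus_nonneg c
  rw [dist_mk]
  nlinarith

instance [Nonempty R] : Nonempty (InterpSpace R c) := ⟨⟨Classical.arbitrary R⟩⟩

instance [CompactSpace R] : CompactSpace (InterpSpace R c) :=
  surjective_mk.compactSpace
    (LipschitzWith.of_dist_le_mul (K := 1) fun p q => by simpa using dist_mk_le p q).continuous

end InterpSpace

/- For `0 < c < 1` the pseudometric on `InterpSpace R c` is a metric, but at `c = 0` (resp. `1`) it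
identifies pairs with the same first (resp. second) coordinate. -/
noncomputable def interpGH (R : Set (A × B)) [CompactSpace R] [Nonempty R] (c : unitInterval) :
    GHSpace :=
  toGHSpace (SeparationQuotient (InterpSpace R c))

theorem surjective_mk_interpSpace (R : Set (A × B)) (c : unitInterval) :
    Surjective fun p : R => SeparationQuotient.mk (InterpSpace.mk (c := c) p) :=
  SeparationQuotient.surjective_mk.comp InterpSpace.surjective_mk

variable (R : Set (A × B)) [CompactSpace R] [Nonempty R]

theorem dist_interpGH_le {D : ℝ} (hD : ∀ p q : R, |dist p.1.1 q.1.1 - dist p.1.2 q.1.2| ≤ 2 * D)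
    (c c' : unitInterval) : dist (interpGH R c) (interpGH R c') ≤ D * dist c c' := by
  have hD₀ : 0 ≤ D := by
    obtain ⟨p⟩ := ‹Nonempty R›
    simpa using hD p p
  refine dist_toGHSpace_le_of_surjective (surjective_mk_interpSpace R c)
    (surjective_mk_interpSpace R c') (mul_nonneg hD₀ dist_nonneg) fun p q => ?_
  simp only [SeparationQuotient.dist_mk, InterpSpace.dist_mk]
  calc |(1 - c) * dist p.1.1 q.1.1 + c * dist p.1.2 q.1.2
          - ((1 - c') * dist p.1.1 q.1.1 + c' * dist p.1.2 q.1.2)|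
        = dist c c' * |dist p.1.1 q.1.1 - dist p.1.2 q.1.2| := by
          rw [Subtype.dist_eq, Real.dist_eq, ← abs_mul, ← abs_neg]; ring_nf
    _ ≤ dist c c' * (2 * D) := mul_le_mul_of_nonneg_left (hD p q) dist_nonneg
    _ = 2 * (D * dist c c') := by ring

variable {R}

theorem interpGH_zero [CompactSpace A] [Nonempty A] (hR : IsCorrespondence R) :
    interpGH R 0 = toGHSpace A := by
  refine (dist_le_zero.1 (dist_toGHSpace_le_of_surjective hR.surjective_fst
    (surjective_mk_interpSpace R 0) le_rfl fun p q => ?_)).symm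
  simp [SeparationQuotient.dist_mk, InterpSpace.dist_mk]

theorem interpGH_one [CompactSpace B] [Nonempty B] (hR : IsCorrespondence R) :
    interpGH R 1 = toGHSpace B := by
  refine dist_le_zero.1 (dist_toGHSpace_le_of_surjective (surjective_mk_interpSpace R 1)
    hR.surjective_snd le_rfl fun p q => ?_)
  simp [SeparationQuotient.dist_mk, InterpSpace.dist_mk]

end GromovHausdorff

theorem stmt15 (X Y : GHSpace) :
    ∃ γ : ℝ → GHSpace, γ 0 = X ∧ γ (dist X Y) = Y ∧
      ∀ s ∈ Set.Icc (0 : ℝ) (dist X Y), ∀ t ∈ Set.Icc (0 : ℝ) (dist X Y),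
        dist (γ s) (γ t) = |s - t| := by
  have hf := isometry_optimalGHInjl X.Rep Y.Rep
  have hg := isometry_optimalGHInjr X.Rep Y.Rep
  have hXY : hausdorffDist (range (optimalGHInjl X.Rep Y.Rep)) (range (optimalGHInjr X.Rep Y.Rep))
      = dist X Y := by
    rw [hausdorffDist_optimal, dist_ghDist]
  set R := {p : X.Rep × Y.Rep |
    dist (optimalGHInjl X.Rep Y.Rep p.1) (optimalGHInjr X.Rep Y.Rep p.2) ≤ dist X Y}
  have hR : IsCorrespondence R := by
    simpa only [hXY] using isCorrespondence_setOf_dist_le_hausdorffDist hf.continuous hg.continuous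
  have : CompactSpace R :=
    isCompact_iff_compactSpace.1 (isClosed_setOf_dist_le hf.continuous hg.continuous _).isCompact
  have : Nonempty R := hR.surjective_fst.nonempty
  have h₀ : interpGH R 0 = X := (interpGH_zero hR).trans X.toGHSpace_rep
  have h₁ : interpGH R 1 = Y := (interpGH_one hR).trans Y.toGHSpace_rep
  have hlip : ∀ c c', dist (interpGH R c) (interpGH R c') ≤
      dist (interpGH R 0) (interpGH R 1) * dist c c' := by
    rw [h₀, h₁]
    exact dist_interpGH_le R fun p q => abs_dist_sub_dist_le_of_dist_le hf hg p.2 q.2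
  obtain ⟨γ, hγ₀, hγ₁, hγ⟩ := exists_geodesic_of_dist_le_mul (interpGH R) hlip
  simp only [h₀, h₁] at hγ₀ hγ₁ hγ
  exact ⟨γ, hγ₀, hγ₁, hγ⟩
end

section
/- A family M of compact metric spaces is precompact in the Gromov–Hausdorff space 𝔐 if and only if it is uniformly totally bounded, i.e., (1) there exists D ≥ 0 with diam X ≤ D for all X ∈ M, and (2) for every ε > 0 there exists N(ε) ∈ ℕ such that every X ∈ M has an ε-net of at most N(ε) points. -/
open GromovHausdorff Metric Filter Topology

/-!
If `dist p q < r`, then in an optimal coupling every point of either space is `r`-close to a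
point of the other, so diameters change by at most `2 r` and an `ε`-net of `q` is carried to an
`(ε + 2 r)`-net of `p` with no more points. A totally bounded family is covered by finitely many
small balls, so both bounds propagate from their centers to the whole family. Conversely, uniform
total boundedness implies total boundedness by Gromov's criterion
`GromovHausdorff.totallyBounded`, and since `GHSpace` is complete, precompactness is total
boundedness.
-/
theorem isCompact_closure_iff_totallyBounded {α : Type*} [UniformSpace α] [CompleteSpace α]
    {s : Set α} : IsCompact (closure s) ↔ TotallyBounded s := by
  rw [isCompact_iff_totallyBounded_isComplete, totallyBounded_closure]
  exact and_iff_left isClosed_closure.isComplete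

def HasNetOfCardLE (X : Type*) [PseudoMetricSpace X] (N : ℕ) (ε : ℝ) : Prop :=
  ∃ S : Finset X, S.card ≤ N ∧ ∀ x : X, ∃ s ∈ S, dist s x < ε

namespace HasNetOfCardLE

variable {X : Type*} [PseudoMetricSpace X] {N N' : ℕ} {ε ε' : ℝ}

theorem mono (h : HasNetOfCardLE X N ε) (hN : N ≤ N') (hε : ε ≤ ε') :
    HasNetOfCardLE X N' ε' := by
  obtain ⟨S, hS, hnet⟩ := h
  refine ⟨S, hS.trans hN, fun x => ?_⟩
  obtain ⟨s, hs, hsx⟩ := hnet x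
  exact ⟨s, hs, hsx.trans_le hε⟩

theorem exists_of_compactSpace [CompactSpace X] (hε : 0 < ε) : ∃ N, HasNetOfCardLE X N ε := by
  obtain ⟨t, -, ht, hcover⟩ := finite_cover_balls_of_compact (isCompact_univ (X := X)) hε
  refine ⟨ht.toFinset.card, ht.toFinset, le_rfl, fun x => ?_⟩
  obtain ⟨s, hs, hxs⟩ := Set.mem_iUnion₂.1 (hcover (Set.mem_univ x))
  exact ⟨s, ht.mem_toFinset.2 hs, by rwa [dist_comm]⟩

theorem exists_cover_by_balls (h : HasNetOfCardLE X N ε) :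
    ∃ s : Set X, Cardinal.mk s ≤ N ∧ Set.univ ⊆ ⋃ x ∈ s, ball x ε := by
  obtain ⟨S, hS, hnet⟩ := h
  refine ⟨S, by simpa using hS, fun x _ => ?_⟩
  obtain ⟨s, hs, hsx⟩ := hnet x
  exact Set.mem_iUnion₂.2 ⟨s, hs, mem_ball.2 (by rwa [dist_comm])⟩

end HasNetOfCardLE

namespace GromovHausdorff

variable {p q : GHSpace} {r : ℝ}

theorem hausdorffDist_range_optimalGHInj_lt (h : dist p q < r) :
    hausdorffDist (Set.range (optimalGHInjl p.Rep q.Rep)) (Set.range (optimalGHInjr p.Rep q.Rep))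
      < r := by
  rwa [hausdorffDist_optimal, ← dist_ghDist]

theorem hausdorffEDist_range_optimalGHInj_ne_top :
    hausdorffEDist (Set.range (optimalGHInjl p.Rep q.Rep))
      (Set.range (optimalGHInjr p.Rep q.Rep)) ≠ ⊤ :=
  hausdorffEDist_ne_top_of_nonempty_of_bounded (Set.range_nonempty _) (Set.range_nonempty _)
    (isCompact_range (isometry_optimalGHInjl _ _).continuous).isBounded
    (isCompact_range (isometry_optimalGHInjr _ _).continuous).isBounded

theorem exists_dist_optimalGHInjr_lt (h : dist p q < r) (x : p.Rep) :
    ∃ y : q.Rep, dist (optimalGHInjl p.Rep q.Rep x) (optimalGHInjr p.Rep q.Rep y) < r := by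
  obtain ⟨_, ⟨y, rfl⟩, hy⟩ := exists_dist_lt_of_hausdorffDist_lt (Set.mem_range_self x)
    (hausdorffDist_range_optimalGHInj_lt h) hausdorffEDist_range_optimalGHInj_ne_top
  exact ⟨y, hy⟩

theorem exists_dist_optimalGHInjl_lt (h : dist p q < r) (y : q.Rep) :
    ∃ x : p.Rep, dist (optimalGHInjl p.Rep q.Rep x) (optimalGHInjr p.Rep q.Rep y) < r := by
  obtain ⟨_, ⟨x, rfl⟩, hx⟩ := exists_dist_lt_of_hausdorffDist_lt' (Set.mem_range_self y)
    (hausdorffDist_range_optimalGHInj_lt h) hausdorffEDist_range_optimalGHInj_ne_top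
  exact ⟨x, hx⟩

theorem diam_univ_le_of_dist_lt (h : dist p q < r) :
    diam (Set.univ : Set p.Rep) ≤ diam (Set.univ : Set q.Rep) + 2 * r := by
  set Φ := optimalGHInjl p.Rep q.Rep
  set Ψ := optimalGHInjr p.Rep q.Rep
  have hr : 0 ≤ r := dist_nonneg.trans h.le
  refine diam_le_of_forall_dist_le (by positivity) fun x _ x' _ => ?_
  obtain ⟨y, hy⟩ := exists_dist_optimalGHInjr_lt h x
  obtain ⟨y', hy'⟩ := exists_dist_optimalGHInjr_lt h x'
  have hyy' : dist y y' ≤ diam (Set.univ : Set q.Rep) :=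
    dist_le_diam_of_mem isCompact_univ.isBounded (Set.mem_univ _) (Set.mem_univ _)
  calc dist x x' = dist (Φ x) (Φ x') := ((isometry_optimalGHInjl _ _).dist_eq x x').symm
    _ ≤ dist (Φ x) (Ψ y) + dist (Ψ y) (Ψ y') + dist (Ψ y') (Φ x') := dist_triangle4 _ _ _ _
    _ = dist (Φ x) (Ψ y) + dist y y' + dist (Φ x') (Ψ y') := by
      rw [(isometry_optimalGHInjr _ _).dist_eq, dist_comm (Ψ y')]
    _ ≤ diam (Set.univ : Set q.Rep) + 2 * r := by linarith

theorem diam_univ_le_add_two_mul_dist (p q : GHSpace) :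
    diam (Set.univ : Set p.Rep) ≤ diam (Set.univ : Set q.Rep) + 2 * dist p q := by
  refine le_of_forall_pos_le_add fun δ hδ => ?_
  have := diam_univ_le_of_dist_lt (r := dist p q + δ / 2) (lt_add_of_pos_right _ (half_pos hδ))
  linarith

theorem hasNetOfCardLE_of_dist_lt {N : ℕ} {ε : ℝ} (h : dist p q < r)
    (hq : HasNetOfCardLE q.Rep N ε) : HasNetOfCardLE p.Rep N (ε + 2 * r) := by
  classical
  set Φ := optimalGHInjl p.Rep q.Rep
  set Ψ := optimalGHInjr p.Rep q.Rep
  obtain ⟨S, hS, hnet⟩ := hq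
  choose f hf using exists_dist_optimalGHInjl_lt h
  refine ⟨S.image f, Finset.card_image_le.trans hS, fun x => ?_⟩
  obtain ⟨y, hy⟩ := exists_dist_optimalGHInjr_lt h x
  obtain ⟨s, hs, hsy⟩ := hnet y
  refine ⟨f s, Finset.mem_image_of_mem f hs, ?_⟩
  calc dist (f s) x = dist (Φ (f s)) (Φ x) := ((isometry_optimalGHInjl _ _).dist_eq _ _).symm
    _ ≤ dist (Φ (f s)) (Ψ s) + dist (Ψ s) (Ψ y) + dist (Ψ y) (Φ x) := dist_triangle4 _ _ _ _
    _ = dist (Φ (f s)) (Ψ s) + dist s y + dist (Φ x) (Ψ y) := by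
      rw [(isometry_optimalGHInjr _ _).dist_eq, dist_comm (Ψ y)]
    _ < ε + 2 * r := by linarith [hf s]

end GromovHausdorff

namespace TotallyBounded

variable {M : Set GHSpace}

theorem exists_diam_univ_le (hM : TotallyBounded M) :
    ∃ D ≥ (0 : ℝ), ∀ p ∈ M, diam (Set.univ : Set p.Rep) ≤ D := by
  obtain ⟨R, hR⟩ := hM.isBounded.subset_closedBall (default : GHSpace)
  refine ⟨diam (Set.univ : Set (default : GHSpace).Rep) + 2 * max R 0, by positivity,
    fun p hp => ?_⟩
  have hpR : dist p default ≤ max R 0 := (mem_closedBall.1 (hR hp)).trans (le_max_left _ _)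
  linarith [diam_univ_le_add_two_mul_dist p default]

theorem exists_hasNetOfCardLE (hM : TotallyBounded M) {ε : ℝ} (hε : 0 < ε) :
    ∃ N, ∀ p ∈ M, HasNetOfCardLE p.Rep N ε := by
  obtain ⟨t, ht, hcover⟩ := Metric.totallyBounded_iff.1 hM (ε / 4) (by positivity)
  choose N hN using fun q : GHSpace => HasNetOfCardLE.exists_of_compactSpace (X := q.Rep)
    (half_pos hε)
  refine ⟨ht.toFinset.sup N, fun p hp => ?_⟩
  obtain ⟨q, hq, hpq⟩ := Set.mem_iUnion₂.1 (hcover hp)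
  exact (hasNetOfCardLE_of_dist_lt (mem_ball.1 hpq) (hN q)).mono
    (Finset.le_sup (ht.mem_toFinset.2 hq)) (by linarith)

end TotallyBounded

theorem totallyBounded_of_diam_le_of_hasNetOfCardLE {M : Set GHSpace} {D : ℝ}
    (hdiam : ∀ p ∈ M, diam (Set.univ : Set p.Rep) ≤ D)
    (hnet : ∀ ε > (0 : ℝ), ∃ N, ∀ p ∈ M, HasNetOfCardLE p.Rep N ε) : TotallyBounded M := by
  choose N hN using fun n : ℕ => hnet (1 / ((n : ℝ) + 1)) Nat.one_div_pos_of_nat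
  exact GromovHausdorff.totallyBounded tendsto_one_div_add_atTop_nhds_zero_nat hdiam
    fun p hp n => (hN n p hp).exists_cover_by_balls

theorem stmt17 (M : Set GHSpace) :
    IsCompact (closure M) ↔
      ((∃ D ≥ (0 : ℝ), ∀ p ∈ M, Metric.diam (Set.univ : Set p.Rep) ≤ D) ∧
        ∀ ε > (0 : ℝ), ∃ N : ℕ, ∀ p ∈ M,
          ∃ S : Finset p.Rep, S.card ≤ N ∧ ∀ x : p.Rep, ∃ s ∈ S, dist s x < ε) := by
  rw [isCompact_closure_iff_totallyBounded]
  constructor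
  · intro hM
    exact ⟨hM.exists_diam_univ_le, fun ε hε => hM.exists_hasNetOfCardLE hε⟩
  · rintro ⟨⟨D, -, hdiam⟩, hnet⟩
    exact totallyBounded_of_diam_le_of_hasNetOfCardLE hdiam hnet
end
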